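/- arXiv:1907.05546 — 2 statements merged into one kernel-verified Lean document; each statement's English description precedes it below -/
import Mathlib

section
/- For every integer n ≥ 5 and every edge e of the Kneser graph K(n,2), the graph K(n,2)−e contains an induced path on 6 vertices. -/
/-!
Write the deleted edge as `{a, b} ~ {c, d}` and pick a fifth point `e`. Then
`ab, ce, ad, bc, ae, cd` is an induced path once that edge is gone: consecutive pairs are
disjoint, and any two non-consecutive ones meet, except `ab` and `cd`. An injection
`Fin 5 ↪ Fin n` with `0, 1, 2, 3, 4 ↦ a, b, c, d, e` embeds `K(5,2)` into `K(n,2)`, so it suffices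
to check this path in `K(5,2)`, which is a finite computation.
-/

open SimpleGraph

/-- The Kneser graph `K(n,2)`: vertices are the 2-element subsets of `{1,…,n}`,
adjacent iff disjoint. -/
def kneser (n : ℕ) : SimpleGraph {s : Finset (Fin n) // s.card = 2} where
  Adj u v := Disjoint u.1 v.1
  symm := ⟨fun u v h => Disjoint.symm h⟩
  loopless := by
    constructor
    intro u h
    have h0 : u.1 = ∅ := disjoint_self.mp h
    have h2 := u.2
    rw [h0] at h2
    simp at h2

instance (n : ℕ) : DecidableRel (kneser n).Adj :=
  fun u v => inferInstanceAs (Decidable (Disjoint u.1 v.1))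

def SimpleGraph.Embedding.deleteEdges {V W : Type*} {G : SimpleGraph V} {H : SimpleGraph W}
    (f : G ↪g H) (s : Set (Sym2 V)) : G.deleteEdges s ↪g H.deleteEdges (Sym2.map f '' s) where
  toEmbedding := f.toEmbedding
  map_rel_iff' {x y} := by
    simp only [deleteEdges_adj, ← Sym2.map_mk]
    exact and_congr f.map_adj_iff (not_congr (Sym2.map.injective f.injective).mem_set_image)

def kneserEmbedding {m n : ℕ} (f : Fin m ↪ Fin n) : kneser m ↪g kneser n where
  toFun s := ⟨s.1.map f, by rw [Finset.card_map, s.2]⟩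
  inj' s t h := Subtype.ext (Finset.map_injective f (congrArg Subtype.val h))
  map_rel_iff' := Finset.disjoint_map f

@[simp]
lemma coe_kneserEmbedding_apply {m n : ℕ} (f : Fin m ↪ Fin n)
    (s : {s : Finset (Fin m) // s.card = 2}) :
    (kneserEmbedding f s : Finset (Fin n)) = s.1.map f :=
  rfl

lemma kneser_five_deleteEdge_induced_P6 :
    Nonempty (pathGraph 6 ↪g (kneser 5).deleteEdges {s(⟨{0, 1}, rfl⟩, ⟨{2, 3}, rfl⟩)}) := by
  refine ⟨⟨⟨![⟨{0, 1}, rfl⟩, ⟨{2, 4}, rfl⟩, ⟨{0, 3}, rfl⟩, ⟨{1, 2}, rfl⟩, ⟨{0, 4}, rfl⟩,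
    ⟨{2, 3}, rfl⟩], by decide⟩, fun {i j} => ?_⟩⟩
  revert i j
  simp only [deleteEdges_adj, Set.mem_singleton_iff, pathGraph_adj]
  decide

lemma exists_kneserEmbedding_eq_of_adj {n : ℕ} (hn : 5 ≤ n)
    {u v : {s : Finset (Fin n) // s.card = 2}} (huv : (kneser n).Adj u v) :
    ∃ f : Fin 5 ↪ Fin n,
      kneserEmbedding f ⟨{0, 1}, rfl⟩ = u ∧ kneserEmbedding f ⟨{2, 3}, rfl⟩ = v := by
  obtain ⟨a, b, hab, hu⟩ := Finset.card_eq_two.mp u.2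
  obtain ⟨c, d, hcd, hv⟩ := Finset.card_eq_two.mp v.2
  have hdisj : Disjoint ({a, b} : Finset (Fin n)) {c, d} := hu ▸ hv ▸ huv
  simp only [Finset.disjoint_insert_left, Finset.disjoint_singleton_left, Finset.mem_insert,
    Finset.mem_singleton, not_or] at hdisj
  obtain ⟨⟨hac, had⟩, hbc, hbd⟩ := hdisj
  obtain ⟨e, -, he⟩ : ∃ e ∈ Finset.univ, e ∉ ({a, b, c, d} : Finset (Fin n)) :=
    Finset.exists_mem_notMem_of_card_lt_card (Finset.card_le_four.trans_lt (by simp; omega))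
  simp only [Finset.mem_insert, Finset.mem_singleton, not_or] at he
  obtain ⟨hea, heb, hec, hed⟩ := he
  have hinj : Function.Injective ![a, b, c, d, e] := by
    simp [Function.Injective, Fin.forall_fin_succ, *, Ne.symm]
  exact ⟨⟨_, hinj⟩, Subtype.ext (by simp [hu]), Subtype.ext (by simp [hv])⟩

/-- For every integer `n ≥ 5` and every edge of `K(n,2)`, deleting that edge creates an
induced path on 6 vertices. -/
theorem kneser_deleteEdge_induced_P6 (n : ℕ) (hn : 5 ≤ n)
    (u v : {s : Finset (Fin n) // s.card = 2}) (huv : (kneser n).Adj u v) :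
    Nonempty (pathGraph 6 ↪g (kneser n).deleteEdges {s(u, v)}) := by
  obtain ⟨f, rfl, rfl⟩ := exists_kneserEmbedding_eq_of_adj hn huv
  obtain ⟨p⟩ := kneser_five_deleteEdge_induced_P6
  have h := (kneserEmbedding f).deleteEdges {s(⟨{0, 1}, rfl⟩, ⟨{2, 3}, rfl⟩)}
  rw [Set.image_singleton, Sym2.map_mk] at h
  exact ⟨p.trans h⟩
end

section
/- For every integer n ≥ 2, the graph G_n is vertex-transitive: for every two vertices v and v' of G_n there exists an automorphism φ of G_n (a graph isomorphism from G_n to itself) such that φ(v) = v'. -/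
open SimpleGraph

/-- Vertex set of the graph `Gₙ`: `ℤ₂ × ℤ₂ × ℤ_{2n}`. -/
abbrev GnV (n : ℕ) : Type := ZMod 2 × ZMod 2 × ZMod (2 * n)

/-- The prescribed neighborhood of the vertex `(a, b, j)` in `Gₙ`. -/
def nbhd (n : ℕ) (v : GnV n) : Set (GnV n) :=
  {(1 - v.1, 1 - v.2.1, v.2.2),
   (v.1, 1 - v.2.1, v.2.2),
   (v.1, v.1 + v.2.1, v.2.2 - 1),
   (v.1, v.1 + v.2.1, v.2.2 + 1),
   (1 - v.1, v.1 + v.2.1, v.2.2 + if v.1 = 0 then 2 else -2)}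

/-- The graph `Gₙ` on `ℤ₂ × ℤ₂ × ℤ_{2n}`, where the neighborhood of `(a,b,j)` is exactly
`{(1-a,1-b,j), (a,1-b,j), (a,a+b,j-1), (a,a+b,j+1), (1-a,a+b,j+2(-1)^a)}`
(this relation is symmetric, and for `n ≥ 2` no vertex lies in its own neighborhood). -/
def Gn (n : ℕ) : SimpleGraph (GnV n) where
  Adj u v := u ≠ v ∧ (u ∈ nbhd n v ∨ v ∈ nbhd n u)
  symm := by
    refine ⟨?_⟩
    intro u v h
    exact ⟨Ne.symm h.1, h.2.symm⟩
  loopless := by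
    refine ⟨?_⟩
    intro u h
    exact h.1 rfl

/-!
Two kinds of automorphisms suffice. The translations `(a, b, j) ↦ (a, b + c, j + t)` commute
with all five neighbourhood rules, so they act transitively on each layer `a = const`. The
reflection `(a, b, j) ↦ (1 - a, b + (j mod 2), -j)` is an involutive automorphism swapping the two
layers. Hence every vertex is mapped to `0` by some automorphism.
-/

def parity (n : ℕ) : ZMod (2 * n) →+* ZMod 2 := ZMod.castHom (dvd_mul_right 2 n) (ZMod 2)

lemma parity_two (n : ℕ) : parity n 2 = 0 := by
  rw [map_ofNat]; decide

lemma zmod_two_eq_zero_or_one (a : ZMod 2) : a = 0 ∨ a = 1 := by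
  revert a; decide

def SimpleGraph.Iso.ofMapAdj {V W : Type*} {G : SimpleGraph V} {H : SimpleGraph W} (e : V ≃ W)
    (he : ∀ ⦃u v⦄, G.Adj u v → H.Adj (e u) (e v))
    (he' : ∀ ⦃u v⦄, H.Adj u v → G.Adj (e.symm u) (e.symm v)) : G ≃g H where
  toEquiv := e
  map_rel_iff' := ⟨fun h ↦ by simpa using he' h, fun h ↦ he h⟩

lemma Gn_adj_map_of_mem_nbhd {n : ℕ} {f : GnV n → GnV n} (hf : f.Injective)
    (hnbhd : ∀ ⦃u v⦄, u ∈ nbhd n v → f u ∈ nbhd n (f v) ∨ f v ∈ nbhd n (f u))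
    ⦃u v : GnV n⦄ (h : (Gn n).Adj u v) : (Gn n).Adj (f u) (f v) :=
  ⟨hf.ne h.1, h.2.elim (hnbhd ·) (fun h ↦ (hnbhd h).symm)⟩

lemma add_mem_nbhd_add {n : ℕ} {w : GnV n} (hw : w.1 = 0) {u v : GnV n} (h : u ∈ nbhd n v) :
    u + w ∈ nbhd n (v + w) := by
  obtain ⟨a, b, j⟩ := v
  obtain ⟨_, c, t⟩ := w
  subst hw
  simp only [nbhd, Set.mem_insert_iff, Set.mem_singleton_iff] at h ⊢
  rcases h with rfl | rfl | rfl | rfl | rfl <;> simp only [Prod.mk_add_mk, Prod.mk.injEq] <;> grind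

def translationIso {n : ℕ} (w : GnV n) (hw : w.1 = 0) : Gn n ≃g Gn n :=
  .ofMapAdj (Equiv.addRight w)
    (Gn_adj_map_of_mem_nbhd (add_left_injective w) fun _ _ h ↦ .inl (add_mem_nbhd_add hw h))
    (Gn_adj_map_of_mem_nbhd (add_left_injective (-w))
      fun _ _ h ↦ .inl (add_mem_nbhd_add (by simp [hw]) h))

def reflect (n : ℕ) (v : GnV n) : GnV n := (1 - v.1, v.2.1 + parity n v.2.2, -v.2.2)

lemma reflect_involutive (n : ℕ) : Function.Involutive (reflect n) := by
  rintro ⟨a, b, j⟩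
  simp only [reflect, map_neg, Prod.mk.injEq]
  grind

/-- The reflection exchanges the `j - 1` and `j + 1` neighbours, the parity term absorbing the
change of `a` in `b ↦ a + b`; a cross-layer edge is mapped to the reversed cross-layer edge. -/
lemma reflect_mem_nbhd {n : ℕ} ⦃u v : GnV n⦄ (h : u ∈ nbhd n v) :
    reflect n u ∈ nbhd n (reflect n v) ∨ reflect n v ∈ nbhd n (reflect n u) := by
  obtain ⟨a, b, j⟩ := v
  have ha := zmod_two_eq_zero_or_one a
  have h2 := parity_two n
  simp only [nbhd, reflect, Set.mem_insert_iff, Set.mem_singleton_iff, Prod.mk.injEq] at h ⊢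
  rcases h with rfl | rfl | rfl | rfl | rfl <;> simp only [map_add, map_sub, map_one] <;> grind

def reflectionIso (n : ℕ) : Gn n ≃g Gn n :=
  have hadj := Gn_adj_map_of_mem_nbhd (reflect_involutive n).injective reflect_mem_nbhd
  .ofMapAdj ((reflect_involutive n).toPerm) hadj hadj

lemma exists_iso_apply_fst_eq_zero {n : ℕ} (v : GnV n) : ∃ φ : Gn n ≃g Gn n, (φ v).1 = 0 := by
  rcases zmod_two_eq_zero_or_one v.1 with h | h
  · exact ⟨.refl, h⟩
  · exact ⟨reflectionIso n, show 1 - v.1 = 0 by simp [h]⟩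

lemma exists_iso_apply_eq_zero {n : ℕ} (v : GnV n) : ∃ φ : Gn n ≃g Gn n, φ v = 0 := by
  obtain ⟨φ, hφ⟩ := exists_iso_apply_fst_eq_zero v
  exact ⟨φ.trans (translationIso (-φ v) (by simp [hφ])), add_neg_cancel (φ v)⟩

theorem Gn_vertexTransitive_general (n : ℕ) (v v' : GnV n) :
    ∃ φ : Gn n ≃g Gn n, φ v = v' := by
  obtain ⟨φ, hφ⟩ := exists_iso_apply_eq_zero v
  obtain ⟨ψ, hψ⟩ := exists_iso_apply_eq_zero v'
  exact ⟨φ.trans ψ.symm, by simp [hφ, ← hψ]⟩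

/-- `Gₙ` is vertex-transitive: for every two vertices `v` and `v'` there is an automorphism
of `Gₙ` sending `v` to `v'`. -/
theorem Gn_vertexTransitive (n : ℕ) (hn : 2 ≤ n) (v v' : GnV n) :
    ∃ φ : Gn n ≃g Gn n, φ v = v' :=
  Gn_vertexTransitive_general n v v'
end
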